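/- arXiv:2507.20116 — 2 statements merged into one kernel-verified Lean document; each statement's English description precedes it below -/
import Mathlib

section
/- Let n ≥ 1, let τ₀ > 0, and for each round t = 1,…,T let U_t : Fin n → ℝ be the utility scores of the n peers at round t. Suppose at round t the peer is selected according to the softmax distribution with temperature τ_t = τ₀/√t, i.e. peer i is chosen with probability p_{t,i} = exp(U_t(i)·√t/τ₀) / Σ_j exp(U_t(j)·√t/τ₀). Then the cumulative expected regret satisfies R(T) = Σ_{t=1}^{T} ( max_i U_t(i) − Σ_i p_{t,i} U_t(i) ) ≤ 2 τ₀ (log n) √T; in particular the cumulative regret is O(√T), i.e. sublinear in T. -/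
open Finset Real

/-- Entropy bound: for a probability vector with positive entries,
`-∑ p log p ≤ log n`. -/
lemma neg_sum_mul_log_le {n : ℕ} (q : Fin n → ℝ) (hq : ∀ i, 0 < q i)
    (hsum : ∑ i, q i = 1) :
    -∑ i, q i * Real.log (q i) ≤ Real.log n := by
  have hmem : ∀ i ∈ Finset.univ, (q i)⁻¹ ∈ Set.Ioi (0:ℝ) := by
    intro i _; exact inv_pos.2 (hq i)
  have h := (strictConcaveOn_log_Ioi.concaveOn).le_map_sum
    (w := q) (p := fun i => (q i)⁻¹) (t := Finset.univ)
    (fun i _ => (hq i).le) hsum hmem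
  have h1 : ∑ i, q i • Real.log (q i)⁻¹ = -∑ i, q i * Real.log (q i) := by
    simp [Real.log_inv, smul_eq_mul, mul_neg, Finset.sum_neg_distrib]
  have h2 : ∑ i, q i • (q i)⁻¹ = (n : ℝ) := by
    simp only [smul_eq_mul]
    rw [Finset.sum_congr rfl fun i _ => mul_inv_cancel₀ (hq i).ne']
    simp
  rw [h1, h2] at h
  exact h

/-- Per-round softmax regret bound: `max u - ∑ p_i u_i ≤ log n / β`. -/
lemma round_regret {n : ℕ} (hn : 1 ≤ n) (β : ℝ) (hβ : 0 < β) (u : Fin n → ℝ) :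
    (Finset.univ.sup' ⟨⟨0, hn⟩, Finset.mem_univ _⟩ u)
      - ∑ i, (Real.exp (u i * β) / ∑ j, Real.exp (u j * β)) * u i
      ≤ Real.log n / β := by
  set Z : ℝ := ∑ j, Real.exp (u j * β) with hZdef
  have hne : (Finset.univ : Finset (Fin n)).Nonempty := ⟨⟨0, hn⟩, Finset.mem_univ _⟩
  have hZ : 0 < Z := Finset.sum_pos (fun j _ => Real.exp_pos _) hne
  set q : Fin n → ℝ := fun i => Real.exp (u i * β) / Z with hqdef
  have hqpos : ∀ i, 0 < q i := fun i => div_pos (Real.exp_pos _) hZ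
  have hqsum : ∑ i, q i = 1 := by
    rw [hqdef, ← Finset.sum_div, ← hZdef, div_self hZ.ne']
  set M := Finset.univ.sup' hne u with hM
  -- log Z ≥ M * β
  obtain ⟨i0, _, hi0⟩ := Finset.exists_mem_eq_sup' hne u
  have hZM : M * β ≤ Real.log Z := by
    have : Real.exp (M * β) ≤ Z := by
      rw [hM, hi0]
      exact Finset.single_le_sum (f := fun j => Real.exp (u j * β))
        (fun j _ => (Real.exp_pos _).le) (Finset.mem_univ i0)
    calc M * β = Real.log (Real.exp (M * β)) := (Real.log_exp _).symm
      _ ≤ Real.log Z := Real.log_le_log (Real.exp_pos _) this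
  -- ∑ q i * u i in terms of entropy
  have hlogq : ∀ i, Real.log (q i) = u i * β - Real.log Z := by
    intro i
    rw [hqdef]
    rw [Real.log_div (Real.exp_pos _).ne' hZ.ne', Real.log_exp]
  have hui : ∀ i, u i = (Real.log (q i) + Real.log Z) / β := by
    intro i; rw [hlogq i]; field_simp; ring
  have hsum_eq : ∑ i, q i * u i
      = ((∑ i, q i * Real.log (q i)) + Real.log Z) / β := by
    calc ∑ i, q i * u i = ∑ i, q i * ((Real.log (q i) + Real.log Z) / β) := by
          refine Finset.sum_congr rfl fun i _ => ?_; rw [← hui i]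
      _ = ((∑ i, q i * Real.log (q i)) + (∑ i, q i) * Real.log Z) / β := by
          rw [Finset.sum_mul, ← Finset.sum_add_distrib, Finset.sum_div]
          refine Finset.sum_congr rfl fun i _ => ?_; ring
      _ = ((∑ i, q i * Real.log (q i)) + Real.log Z) / β := by rw [hqsum, one_mul]
  have hent := neg_sum_mul_log_le q hqpos hqsum
  have : M - ∑ i, q i * u i ≤ Real.log n / β := by
    rw [hsum_eq, sub_div' hβ.ne', div_le_div_iff₀ hβ hβ]
    nlinarith [hZM, hent]
  simpa [hqdef, hM] using this

/-- `∑_{t=1}^T 1/√t ≤ 2√T`. -/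
lemma sum_one_div_sqrt_le (T : ℕ) :
    ∑ t ∈ Finset.Icc 1 T, (1 / Real.sqrt t) ≤ 2 * Real.sqrt T := by
  induction T with
  | zero => simp
  | succ T ih =>
    rw [Finset.sum_Icc_succ_top (by omega : 1 ≤ T + 1)]
    have h1 : (0:ℝ) < Real.sqrt (T + 1) := Real.sqrt_pos.2 (by positivity)
    have h2 : Real.sqrt (T:ℝ) ≤ Real.sqrt ((T:ℝ) + 1) := Real.sqrt_le_sqrt (by linarith)
    have h3 : 1 / Real.sqrt ((T:ℕ) + 1 : ℕ) ≤ 2 * Real.sqrt ((T:ℕ)+1:ℕ) - 2 * Real.sqrt T := by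
      have hT1 : ((T:ℕ)+1:ℕ) = ((T:ℝ)+1) := by push_cast; ring
      rw [hT1]
      have hs : Real.sqrt ((T:ℝ)+1) ^ 2 = (T:ℝ)+1 := Real.sq_sqrt (by positivity)
      have hs2 : Real.sqrt (T:ℝ) ^ 2 = (T:ℝ) := Real.sq_sqrt (by positivity)
      rw [div_le_iff₀ h1]
      nlinarith [Real.sqrt_nonneg (T:ℝ), h1, h2]
    have hT1 : ((T:ℕ)+1:ℕ) = ((T:ℝ)+1) := by push_cast; ring
    calc (∑ t ∈ Finset.Icc 1 T, (1 / Real.sqrt t)) + 1 / Real.sqrt ((T:ℕ)+1:ℕ)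
        ≤ 2 * Real.sqrt T + (2 * Real.sqrt ((T:ℕ)+1:ℕ) - 2 * Real.sqrt T) := by
          exact add_le_add ih h3
      _ = 2 * Real.sqrt ((T:ℕ)+1:ℕ) := by ring

/-- Theorem 1 of the paper: softmax peer selection with temperature
`τ_t = τ₀ / √t` has cumulative expected regret at most `2 τ₀ (log n) √T`. -/
theorem peersync_cumulative_regret
    (n : ℕ) (hn : 1 ≤ n) (τ₀ : ℝ) (hτ : 0 < τ₀) (T : ℕ) (hT : 1 ≤ T)
    (U : ℕ → Fin n → ℝ) (p : ℕ → Fin n → ℝ)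
    (hp : ∀ t : ℕ, ∀ i : Fin n,
      p t i = Real.exp (U t i * Real.sqrt t / τ₀) /
        ∑ j : Fin n, Real.exp (U t j * Real.sqrt t / τ₀)) :
    ∑ t ∈ Finset.Icc 1 T,
        ((Finset.univ.sup' ⟨⟨0, hn⟩, Finset.mem_univ _⟩ (U t))
          - ∑ i : Fin n, p t i * U t i)
      ≤ 2 * τ₀ * Real.log n * Real.sqrt T := by
  have hlogn : 0 ≤ Real.log n := Real.log_nonneg (by exact_mod_cast hn)
  have step : ∀ t ∈ Finset.Icc 1 T,
      (Finset.univ.sup' ⟨⟨0, hn⟩, Finset.mem_univ _⟩ (U t))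
        - ∑ i : Fin n, p t i * U t i ≤ τ₀ * Real.log n * (1 / Real.sqrt t) := by
    intro t ht
    have ht1 : 1 ≤ t := (Finset.mem_Icc.1 ht).1
    have hst : 0 < Real.sqrt t := Real.sqrt_pos.2 (by positivity)
    have hβ : 0 < Real.sqrt t / τ₀ := div_pos hst hτ
    have := round_regret hn (Real.sqrt t / τ₀) hβ (U t)
    have heq : ∀ i, p t i = Real.exp (U t i * (Real.sqrt t / τ₀)) /
        ∑ j, Real.exp (U t j * (Real.sqrt t / τ₀)) := by
      intro i
      rw [hp t i]
      congr 1
      · rw [mul_div_assoc]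
      · refine Finset.sum_congr rfl fun j _ => ?_; rw [mul_div_assoc]
    have hrw : ∑ i : Fin n, p t i * U t i
        = ∑ i, (Real.exp (U t i * (Real.sqrt t / τ₀)) /
            ∑ j, Real.exp (U t j * (Real.sqrt t / τ₀))) * U t i := by
      refine Finset.sum_congr rfl fun i _ => ?_; rw [heq i]
    rw [hrw]
    calc _ ≤ Real.log n / (Real.sqrt t / τ₀) := this
      _ = τ₀ * Real.log n * (1 / Real.sqrt t) := by
          field_simp
  calc ∑ t ∈ Finset.Icc 1 T,
        ((Finset.univ.sup' ⟨⟨0, hn⟩, Finset.mem_univ _⟩ (U t))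
          - ∑ i : Fin n, p t i * U t i)
      ≤ ∑ t ∈ Finset.Icc 1 T, τ₀ * Real.log n * (1 / Real.sqrt t) :=
        Finset.sum_le_sum step
    _ = τ₀ * Real.log n * ∑ t ∈ Finset.Icc 1 T, (1 / Real.sqrt t) := by
        rw [Finset.mul_sum]
    _ ≤ τ₀ * Real.log n * (2 * Real.sqrt T) := by
        apply mul_le_mul_of_nonneg_left (sum_one_div_sqrt_le T)
        positivity
    _ = 2 * τ₀ * Real.log n * Real.sqrt T := by ring
end

section
/- Let n ≥ 1 and let u : Fin n → ℝ. For β > 0 let p^β be the softmax distribution p^β_i = exp(β u_i) / Σ_j exp(β u_j), and let F(β) = Σ_i p^β_i u_i be the expected utility. Then F is monotone nondecreasing on (0, ∞): for 0 < β₁ ≤ β₂ one has F(β₁) ≤ F(β₂). -/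
/-- The expected utility of softmax selection is nondecreasing in the inverse
temperature `β` on `(0, ∞)`. -/
theorem softmax_expected_utility_monotone
    (n : ℕ) (hn : 1 ≤ n) (u : Fin n → ℝ)
    (p : ℝ → Fin n → ℝ)
    (hp : ∀ β : ℝ, ∀ i : Fin n,
      p β i = Real.exp (β * u i) / ∑ j : Fin n, Real.exp (β * u j)) :
    ∀ β₁ β₂ : ℝ, 0 < β₁ → β₁ ≤ β₂ →
      ∑ i : Fin n, p β₁ i * u i ≤ ∑ i : Fin n, p β₂ i * u i := by
  intro β₁ β₂ hβ₁ hle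
  haveI : Nonempty (Fin n) := ⟨⟨0, hn⟩⟩
  have hS : ∀ β : ℝ, 0 < ∑ j : Fin n, Real.exp (β * u j) := fun β =>
    Finset.sum_pos (fun i _ => Real.exp_pos _) Finset.univ_nonempty
  have h1 : ∀ β : ℝ, ∑ i : Fin n, p β i * u i
      = (∑ i : Fin n, Real.exp (β * u i) * u i) / (∑ j : Fin n, Real.exp (β * u j)) := by
    intro β
    simp only [hp, div_mul_eq_mul_div, Finset.sum_div]
  rw [h1, h1, div_le_div_iff₀ (hS β₁) (hS β₂)]
  have key : 0 ≤ ∑ i : Fin n, ∑ j : Fin n,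
      (u i - u j) * (Real.exp (β₂ * u i) * Real.exp (β₁ * u j)
        - Real.exp (β₁ * u i) * Real.exp (β₂ * u j)) := by
    refine Finset.sum_nonneg fun i _ => Finset.sum_nonneg fun j _ => ?_
    rcases le_total (u j) (u i) with h | h
    · apply mul_nonneg (by linarith)
      rw [sub_nonneg, ← Real.exp_add, ← Real.exp_add]
      apply Real.exp_le_exp.2
      nlinarith
    · rw [show (u i - u j) * (Real.exp (β₂ * u i) * Real.exp (β₁ * u j)
          - Real.exp (β₁ * u i) * Real.exp (β₂ * u j))
          = (u j - u i) * (Real.exp (β₁ * u i) * Real.exp (β₂ * u j)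
          - Real.exp (β₂ * u i) * Real.exp (β₁ * u j)) by ring]
      apply mul_nonneg (by linarith)
      rw [sub_nonneg, ← Real.exp_add, ← Real.exp_add]
      apply Real.exp_le_exp.2
      nlinarith
  have expand : ∑ i : Fin n, ∑ j : Fin n,
      (u i - u j) * (Real.exp (β₂ * u i) * Real.exp (β₁ * u j)
        - Real.exp (β₁ * u i) * Real.exp (β₂ * u j))
      = 2 * ((∑ i : Fin n, Real.exp (β₂ * u i) * u i) * (∑ j : Fin n, Real.exp (β₁ * u j))
        - (∑ i : Fin n, Real.exp (β₁ * u i) * u i) * (∑ j : Fin n, Real.exp (β₂ * u j))) := by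
    have h : ∀ i j : Fin n, (u i - u j) * (Real.exp (β₂ * u i) * Real.exp (β₁ * u j)
        - Real.exp (β₁ * u i) * Real.exp (β₂ * u j))
        = (Real.exp (β₂ * u i) * u i) * Real.exp (β₁ * u j)
          - (Real.exp (β₁ * u i) * u i) * Real.exp (β₂ * u j)
          - Real.exp (β₂ * u i) * (Real.exp (β₁ * u j) * u j)
          + Real.exp (β₁ * u i) * (Real.exp (β₂ * u j) * u j) := by
      intro i j; ring
    simp only [h, Finset.sum_add_distrib, Finset.sum_sub_distrib, ← Finset.mul_sum,
      ← Finset.sum_mul]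
    ring
  linarith
end
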